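/- For all integers n ≥ 0 and k ≥ 0, the number of odd-special Dyck paths of length 2n with exactly k special steps equals the number of big Schröder paths of length 2n with exactly k double horizontal steps. -/

import Mathlib

/-- A step of a Schröder path: upstep, downstep, or a *double* horizontal step. -/
inductive SchStep : Type
  | up : SchStep
  | down : SchStep
  | horiz : SchStep
deriving DecidableEq

/-- The number of unit steps a step occupies: `horiz` is a double horizontal step. -/
def SchStep.len : SchStep → ℕ
  | .up => 1
  | .down => 1
  | .horiz => 2

/-- The change in height produced by a step. -/
def SchStep.rise : SchStep → ℤ
  | .up => 1
  | .down => -1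
  | .horiz => 0

/-- The length of a path (a double horizontal step counts 2). -/
def pathLen (p : List SchStep) : ℕ := (p.map SchStep.len).sum

/-- The final height of a path started at height 0. -/
def pathHeight (p : List SchStep) : ℤ := (p.map SchStep.rise).sum

/-- A big Schröder path: ends at height 0 and never goes below the x-axis. -/
def IsBigSchroeder (p : List SchStep) : Prop :=
  pathHeight p = 0 ∧ ∀ q : List SchStep, q <+: p → 0 ≤ pathHeight q

/-- A little Schröder path: a big Schröder path with no double horizontal step at
height 0. -/
def IsLittleSchroeder (p : List SchStep) : Prop :=
  IsBigSchroeder p ∧ ∀ q r : List SchStep, p = q ++ SchStep.horiz :: r → pathHeight q ≠ 0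

/-- A Dyck path is a list of booleans: `true` is an upstep, `false` is a downstep. -/
def dyckHeight (p : List Bool) : ℤ := (p.map fun b => if b then (1 : ℤ) else -1).sum

/-- A Dyck path: ends at height 0 and never goes below the x-axis. -/
def IsDyck (p : List Bool) : Prop :=
  dyckHeight p = 0 ∧ ∀ q : List Bool, q <+: p → 0 ≤ dyckHeight q

/-- An odd-special Dyck path: a Dyck path `ps.1` together with a marked set `ps.2` of
positions of downsteps leaving from odd height. -/
def IsOddSpecial (ps : List Bool × Finset ℕ) : Prop :=
  IsDyck ps.1 ∧
    ∀ i ∈ ps.2, i < ps.1.length ∧ ps.1.getD i true = false ∧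
      dyckHeight (ps.1.take i) % 2 = 1

/-!
Count both families by generating functions in `x = X 0` (semilength) and `y = X 1` (special
steps, resp. double horizontal steps). Cutting an odd-special Dyck path at its first return
`U A D B`, the heights inside `A` are shifted by one, so `A` is even-special, `B` is odd-special,
and `D` leaves from height `1`, so it may be special; for even-special paths it may not. This gives
`O = 1 + x (1 + y) E O` and `E = 1 + x O E`. A big Schröder path is either little or splits at its
first flat on the ground as `L H B`, so `B = L + x y L B`, and the first return of a little path
gives `L = 1 + x B L`. Substituting the last equation into the previous one gives
`B = 1 + x (1 + y) L B`, so both pairs solve the same system, whose solution is determined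
coefficient by coefficient in `x`.
-/

open Finset MvPowerSeries

namespace Walk

variable {α : Type*} (w : α → ℤ)

def height (l : List α) : ℤ := (l.map w).sum

@[simp] lemma height_nil : height w [] = 0 := rfl

@[simp] lemma height_cons (x : α) (l : List α) : height w (x :: l) = w x + height w l := by
  simp [height]

@[simp] lemma height_append (l₁ l₂ : List α) :
    height w (l₁ ++ l₂) = height w l₁ + height w l₂ := by
  simp [height]

def IsWalk (ok : ℤ → α → Prop) : ℤ → List α → Prop
  | _, [] => True
  | c, x :: l => ok c x ∧ IsWalk ok (c + w x) l

variable {w}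

@[simp] lemma isWalk_nil (ok : ℤ → α → Prop) (c : ℤ) : IsWalk w ok c [] := trivial

@[simp] lemma isWalk_cons {ok : ℤ → α → Prop} {c : ℤ} {x : α} {l : List α} :
    IsWalk w ok c (x :: l) ↔ ok c x ∧ IsWalk w ok (c + w x) l := Iff.rfl

lemma isWalk_append {ok : ℤ → α → Prop} {c : ℤ} {l₁ l₂ : List α} :
    IsWalk w ok c (l₁ ++ l₂) ↔ IsWalk w ok c l₁ ∧ IsWalk w ok (c + height w l₁) l₂ := by
  induction l₁ generalizing c with
  | nil => simp
  | cons x l ih => simp [ih, add_assoc, and_assoc]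

lemma IsWalk.mono {ok ok' : ℤ → α → Prop} (hok : ∀ h x, ok h x → ok' h x) :
    ∀ {c : ℤ} {l : List α}, IsWalk w ok c l → IsWalk w ok' c l
  | _, [], _ => trivial
  | _, _ :: _, ⟨hx, hl⟩ => ⟨hok _ _ hx, hl.mono hok⟩

lemma isWalk_and {ok ok' : ℤ → α → Prop} {c : ℤ} {l : List α} :
    IsWalk w (fun h x => ok h x ∧ ok' h x) c l ↔ IsWalk w ok c l ∧ IsWalk w ok' c l := by
  induction l generalizing c with
  | nil => simp
  | cons x l ih => simp only [isWalk_cons, ih]; tauto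

lemma isWalk_add_iff {ok : ℤ → α → Prop} {c d : ℤ} {l : List α} :
    IsWalk w ok (c + d) l ↔ IsWalk w (fun h => ok (h + d)) c l := by
  induction l generalizing c with
  | nil => simp
  | cons x l ih => simp only [isWalk_cons, ← ih, add_right_comm]

lemma IsWalk.le_height {ok : ℤ → α → Prop} {m : ℤ} (hok : ∀ h x, ok h x → m ≤ h + w x) :
    ∀ {c : ℤ} {l : List α}, IsWalk w ok c l → m ≤ c → m ≤ c + height w l
  | _, [], _, hc => by simpa using hc
  | _, x :: _, ⟨hx, hl⟩, _ => by simpa [add_assoc] using hl.le_height hok (hok _ _ hx)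

lemma isWalk_iff_getElem {ok : ℤ → α → Prop} {c : ℤ} {l : List α} :
    IsWalk w ok c l ↔ ∀ i (hi : i < l.length), ok (c + height w (l.take i)) l[i] := by
  induction l generalizing c with
  | nil => simp
  | cons y l ih =>
    simp only [isWalk_cons, ih, List.length_cons]
    constructor
    · rintro ⟨hy, hl⟩ (_ | i) hi
      · simpa using hy
      · simpa [add_assoc] using hl i (by omega)
    · intro h
      exact ⟨by simpa using h 0 (by omega),
        fun i hi => by simpa [add_assoc] using h (i + 1) (Nat.succ_lt_succ hi)⟩

lemma isWalk_map {β : Type*} {w' : β → ℤ} {ok : ℤ → β → Prop} (g : α → β) {c : ℤ}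
    {l : List α} :
    IsWalk (fun x => w' (g x)) (fun h x => ok h (g x)) c l ↔ IsWalk w' ok c (l.map g) := by
  induction l generalizing c with
  | nil => simp
  | cons x l ih => simp [ih]

lemma forall_prefix_nonneg_iff {c : ℤ} {l : List α} :
    (∀ q, q <+: l → 0 ≤ c + height w q) ↔ 0 ≤ c ∧ IsWalk w (fun h x => 0 ≤ h + w x) c l := by
  induction l generalizing c with
  | nil => simp
  | cons x l ih =>
    simp only [List.prefix_cons_iff, isWalk_cons]
    constructor
    · intro h
      have h0 := h [] (Or.inl rfl)
      have hx := h [x] (Or.inr ⟨[], rfl, List.nil_prefix⟩)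
      refine ⟨by simpa using h0, by simpa using hx, (ih.1 fun q hq => ?_).2⟩
      simpa [add_assoc] using h (x :: q) (Or.inr ⟨q, rfl, hq⟩)
    · rintro ⟨hc, hx, hl⟩ q (rfl | ⟨q, rfl, hq⟩)
      · simpa using hc
      · simpa [add_assoc] using (ih.2 ⟨hx, hl⟩) q hq

lemma IsWalk.exists_first {ok : ℤ → α → Prop} (Q : ℤ → α → Prop) :
    ∀ {c : ℤ} {l : List α}, IsWalk w ok c l → ¬ IsWalk w (fun h x => ¬ Q h x) c l →
      ∃ q x r, l = q ++ x :: r ∧ IsWalk w (fun h x => ok h x ∧ ¬ Q h x) c q ∧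
        ok (c + height w q) x ∧ Q (c + height w q) x ∧ IsWalk w ok (c + height w q + w x) r
  | _, [], _, hQ => absurd trivial hQ
  | c, x :: l, ⟨hx, hl⟩, hQ => by
    by_cases hcx : Q c x
    · exact ⟨[], x, l, rfl, trivial, by simpa using hx, by simpa using hcx, by simpa using hl⟩
    · obtain ⟨q, y, r, rfl, hq, hy, hQy, hr⟩ := hl.exists_first Q (fun h => hQ ⟨hcx, h⟩)
      exact ⟨x :: q, y, r, rfl, ⟨⟨hx, hcx⟩, hq⟩, by simpa [add_assoc] using hy,
        by simpa [add_assoc] using hQy, by simpa [add_assoc] using hr⟩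

lemma eq_of_append_cons_eq {Q : ℤ → α → Prop} :
    ∀ {c : ℤ} {q q' r r' : List α} {x x' : α},
      IsWalk w (fun h x => ¬ Q h x) c q → Q (c + height w q) x →
      IsWalk w (fun h x => ¬ Q h x) c q' → Q (c + height w q') x' →
      q ++ x :: r = q' ++ x' :: r' → q = q' ∧ x = x' ∧ r = r'
  | _, [], [], _, _, _, _, _, _, _, _, h => by simp_all
  | _, [], y :: _, _, _, _, _, _, hx, ⟨hy, _⟩, _, h => by
    simp only [List.nil_append, List.cons_append, List.cons.injEq] at h
    exact absurd (by simpa [h.1] using hx) hy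
  | _, y :: _, [], _, _, _, _, ⟨hy, _⟩, _, _, hx', h => by
    simp only [List.nil_append, List.cons_append, List.cons.injEq] at h
    exact absurd (by simpa [h.1] using hx') hy
  | _, y :: q, y' :: q', _, _, _, _, ⟨_, hq⟩, hx, ⟨_, hq'⟩, hx', h => by
    simp only [List.cons_append, List.cons.injEq] at h
    obtain ⟨rfl, h⟩ := h
    obtain ⟨rfl, rfl, rfl⟩ :=
      eq_of_append_cons_eq hq (by simpa [add_assoc] using hx) hq' (by simpa [add_assoc] using hx') h
    exact ⟨rfl, rfl, rfl⟩

variable (w) in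
def IsPath (a : ℤ → α → Prop) (l : List α) : Prop :=
  IsWalk w (fun h x => 0 ≤ h + w x ∧ a h x) 0 l ∧ height w l = 0

lemma isPath_nil (a : ℤ → α → Prop) : IsPath w a [] := ⟨trivial, rfl⟩

lemma IsPath.mono {a a' : ℤ → α → Prop} (ha : ∀ h x, a h x → a' h x) {l : List α}
    (hl : IsPath w a l) : IsPath w a' l :=
  ⟨hl.1.mono fun _ _ hx => ⟨hx.1, ha _ _ hx.2⟩, hl.2⟩

lemma isWalk_congr_of_nonneg {a a' : ℤ → α → Prop} (ha : ∀ h, 0 ≤ h → ∀ x, (a h x ↔ a' h x)) :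
    ∀ {c : ℤ} {l : List α}, 0 ≤ c →
      (IsWalk w (fun h x => 0 ≤ h + w x ∧ a h x) c l ↔
        IsWalk w (fun h x => 0 ≤ h + w x ∧ a' h x) c l)
  | _, [], _ => Iff.rfl
  | c, x :: _, hc => by
    simp only [isWalk_cons, ha c hc x]
    exact and_congr_right fun hx => isWalk_congr_of_nonneg ha hx.1

lemma isPath_congr {a a' : ℤ → α → Prop} (ha : ∀ h, 0 ≤ h → ∀ x, (a h x ↔ a' h x))
    {l : List α} : IsPath w a l ↔ IsPath w a' l :=
  and_congr_left' (isWalk_congr_of_nonneg ha le_rfl)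

variable (w) in
abbrev Path (a : ℤ → α → Prop) := {l : List α // IsPath w a l}

section FirstReturn

variable (u : α) (a : ℤ → α → Prop)

variable (w) in
abbrev ReturnStep := {d : α // w d = -1 ∧ a 1 d}

variable {u a}

lemma isPath_cons_append (hu : w u = 1) (hu0 : a 0 u) {A B : List α} (d : ReturnStep w a)
    (hA : IsPath w (fun h => a (h + 1)) A) (hB : IsPath w a B) :
    IsPath w a (u :: (A ++ d.1 :: B)) := by
  obtain ⟨d, hd, hd1⟩ := d
  have hA' : IsWalk w (fun h x => 0 ≤ h + w x ∧ a h x) 1 A := by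
    simpa using (isWalk_add_iff (c := 0) (d := 1)).2
      (hA.1.mono fun h x hx => ⟨by omega, hx.2⟩)
  refine ⟨?_, by simp [hu, hd, hA.2, hB.2]⟩
  simp only [isWalk_cons, isWalk_append, hu, hA.2, hd]
  exact ⟨⟨by omega, hu0⟩, hA', ⟨by omega, by simpa using hd1⟩, by simpa using hB.1⟩

lemma IsPath.exists_cons_append (hw : ∀ x, -1 ≤ w x) (hu : w u = 1)
    (hstart : ∀ x, a 0 x → 0 ≤ w x → x = u) {x : α} {t : List α} (hp : IsPath w a (x :: t)) :
    ∃ (d : ReturnStep w a) (A B : List α), x :: t = u :: (A ++ d.1 :: B) ∧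
      IsPath w (fun h => a (h + 1)) A ∧ IsPath w a B := by
  obtain ⟨⟨⟨hx0, hxa⟩, ht⟩, hheight⟩ := hp
  obtain rfl := hstart x hxa (by simpa using hx0)
  simp only [zero_add, hu] at ht
  have ht0 : height w t = -1 := by simp only [height_cons, hu] at hheight; omega
  -- `A` ends where `t` first reaches height `0`; steps go down by at most one, so `A` returns
  -- to height `1` and the next step is a down step.
  have hbelow : ¬ IsWalk w (fun h x => ¬ h + w x ≤ 0) 1 t := fun h => by
    have := h.le_height (m := 1) (fun _ _ hx => by omega) le_rfl
    omega
  obtain ⟨A, d, B, rfl, hA, ⟨-, hd1⟩, hdQ, hB⟩ := ht.exists_first _ hbelow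
  have hA0 : 1 ≤ 1 + height w A := hA.le_height (fun _ _ hx => by omega) le_rfl
  have hd : w d = -1 := by have := hw d; omega
  have hAh : height w A = 0 := by have := hw d; omega
  refine ⟨⟨d, hd, by simpa [hAh] using hd1⟩, A, B, rfl, ⟨?_, hAh⟩, ⟨?_, ?_⟩⟩
  · refine (isWalk_add_iff (c := 0) (d := 1)).1 (by simpa using hA) |>.mono fun h x hx => ?_
    exact ⟨by omega, hx.1.2⟩
  · simpa [hAh, hd] using hB
  · simp only [height_append, height_cons, hAh, hd] at ht0; omega

lemma eq_of_cons_append_eq {A A' B B' : List α} {d d' : ReturnStep w a}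
    (hA : IsPath w (fun h => a (h + 1)) A) (hA' : IsPath w (fun h => a (h + 1)) A')
    (h : u :: (A ++ d.1 :: B) = u :: (A' ++ d'.1 :: B')) : A = A' ∧ d = d' ∧ B = B' := by
  have above {A : List α} (hA : IsPath w (fun h => a (h + 1)) A) :
      IsWalk w (fun h x => ¬ h + w x ≤ 0) 1 A := by
    simpa using (isWalk_add_iff (c := 0) (d := 1)).2 (hA.1.mono fun h x hx => by omega)
  obtain ⟨rfl, hd, rfl⟩ := eq_of_append_cons_eq (above hA) (by simp [hA.2, d.2.1])
    (above hA') (by simp [hA'.2, d'.2.1]) (List.cons_injective h)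
  exact ⟨rfl, Subtype.ext hd, rfl⟩

noncomputable def firstReturnEquiv (hw : ∀ x, -1 ≤ w x) (hu : w u = 1) (hu0 : a 0 u)
    (hstart : ∀ x, a 0 x → 0 ≤ w x → x = u) :
    Unit ⊕ ReturnStep w a × Path w (fun h => a (h + 1)) × Path w a ≃ Path w a :=
  Equiv.ofBijective
    (Sum.elim (fun _ => ⟨[], isPath_nil a⟩)
      fun p => ⟨u :: (p.2.1.1 ++ p.1.1 :: p.2.2.1), isPath_cons_append hu hu0 p.1 p.2.1.2 p.2.2.2⟩)
    (by
      refine ⟨?_, ?_⟩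
      · rintro (_ | ⟨d, A, B⟩) (_ | ⟨d', A', B'⟩) h <;> simp only [Sum.elim_inl, Sum.elim_inr,
          Subtype.mk.injEq, reduceCtorEq, List.nil_eq] at h
        · rfl
        · obtain ⟨hA, rfl, hB⟩ := eq_of_cons_append_eq A.2 A'.2 h
          rw [Subtype.ext hA, Subtype.ext hB]
      · rintro ⟨_ | ⟨x, t⟩, hp⟩
        · exact ⟨.inl (), rfl⟩
        · obtain ⟨d, A, B, h, hA, hB⟩ := hp.exists_cons_append hw hu hstart
          exact ⟨.inr (d, ⟨A, hA⟩, ⟨B, hB⟩), Subtype.ext h.symm⟩)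

end FirstReturn

section GroundFlat

def AvoidingGround (f : α) (a : ℤ → α → Prop) (h : ℤ) (x : α) : Prop :=
  a h x ∧ ¬ (h = 0 ∧ x = f)

variable {f : α} {a : ℤ → α → Prop}

lemma isPath_append_cons (hf : w f = 0) (hf0 : a 0 f) {q r : List α}
    (hq : IsPath w (AvoidingGround f a) q) (hr : IsPath w a r) : IsPath w a (q ++ f :: r) := by
  refine ⟨?_, by simp [hq.2, hf, hr.2]⟩
  simp only [isWalk_append, isWalk_cons, hq.2, hf, add_zero]
  exact ⟨hq.1.mono fun _ _ hx => ⟨hx.1, hx.2.1⟩, ⟨le_rfl, hf0⟩, hr.1⟩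

lemma IsPath.exists_append_cons (hf : w f = 0) {p : List α} (hp : IsPath w a p)
    (hgf : ¬ IsPath w (AvoidingGround f a) p) :
    ∃ q r, p = q ++ f :: r ∧ IsPath w (AvoidingGround f a) q ∧ IsPath w a r := by
  have hQ : ¬ IsWalk w (fun h x => ¬ (h = 0 ∧ x = f)) 0 p := fun h =>
    hgf ⟨(isWalk_and.2 ⟨hp.1, h⟩).mono fun _ _ hx => ⟨hx.1.1, hx.1.2, hx.2⟩, hp.2⟩
  obtain ⟨q, x, r, rfl, hq, -, ⟨hq0, rfl⟩, hr⟩ := hp.1.exists_first _ hQ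
  simp only [zero_add] at hq0
  refine ⟨q, r, rfl, ⟨hq.mono fun _ _ hx => ⟨hx.1.1, hx.1.2, hx.2⟩, hq0⟩, ?_, ?_⟩
  · simpa [hq0, hf] using hr
  · simpa [hq0, hf] using hp.2

lemma not_isPath_avoidingGround_append_cons {q r : List α} (hq0 : height w q = 0) :
    ¬ IsPath w (AvoidingGround f a) (q ++ f :: r) := fun h => by
  have := (isWalk_append.1 h.1).2.1.2.2
  simp_all

noncomputable def groundFlatEquiv (hf : w f = 0) (hf0 : a 0 f) :
    Path w (AvoidingGround f a) ⊕ Path w (AvoidingGround f a) × Path w a ≃ Path w a :=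
  Equiv.ofBijective
    (Sum.elim (fun q => ⟨q.1, q.2.mono fun _ _ hx => hx.1⟩)
      fun p => ⟨p.1.1 ++ f :: p.2.1, isPath_append_cons hf hf0 p.1.2 p.2.2⟩)
    (by
      have above {q : List α} (hq : IsPath w (AvoidingGround f a) q) :
          IsWalk w (fun h x => ¬ (h = 0 ∧ x = f)) 0 q := hq.1.mono fun _ _ hx => hx.2.2
      refine ⟨?_, ?_⟩
      · rintro (q | ⟨q, r⟩) (q' | ⟨q', r'⟩) h <;>
          simp only [Sum.elim_inl, Sum.elim_inr, Subtype.mk.injEq] at h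
        · exact congrArg _ (Subtype.ext h)
        · exact absurd (h ▸ q.2) (not_isPath_avoidingGround_append_cons q'.2.2)
        · exact absurd (h.symm ▸ q'.2) (not_isPath_avoidingGround_append_cons q.2.2)
        · obtain ⟨hqq, -, hrr⟩ := eq_of_append_cons_eq (above q.2) (by simp [q.2.2])
            (above q'.2) (by simp [q'.2.2]) h
          rw [Subtype.ext hqq, Subtype.ext hrr]
      · rintro ⟨p, hp⟩
        by_cases hgf : IsPath w (AvoidingGround f a) p
        · exact ⟨.inl ⟨p, hgf⟩, rfl⟩
        · obtain ⟨q, r, rfl, hq, hr⟩ := hp.exists_append_cons hf hgf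
          exact ⟨.inr (⟨q, hq⟩, ⟨r, hr⟩), rfl⟩)

end GroundFlat

end Walk

lemma ENat.card_sigma {ι : Type*} [Fintype ι] (β : ι → Type*) :
    ENat.card (Σ i, β i) = ∑ i, ENat.card (β i) := by
  by_cases h : ∀ i, Finite (β i)
  · simp only [ENat.card_eq_coe_natCard, Nat.card_sigma, Nat.cast_sum]
  · simp only [not_forall, not_finite_iff_infinite] at h
    obtain ⟨i, hi⟩ := h
    have := Infinite.sigma_of_right (β := β) (a := i)
    rw [ENat.card_eq_top_of_infinite, eq_comm, ENat.sum_eq_top]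
    exact ⟨i, Finset.mem_univ _, ENat.card_eq_top_of_infinite⟩

section GenFun

variable {σ α β : Type*}

/-- Coefficients in `ℕ∞` make the sum and product rules below hold without finiteness
hypotheses. -/
noncomputable def genFun (f : α → σ →₀ ℕ) : MvPowerSeries σ ℕ∞ := fun e => ENat.card {x // f x = e}

lemma coeff_genFun (f : α → σ →₀ ℕ) (e : σ →₀ ℕ) :
    coeff e (genFun f) = ENat.card {x // f x = e} := rfl

lemma genFun_congr (e : α ≃ β) {f : α → σ →₀ ℕ} {g : β → σ →₀ ℕ} (h : ∀ x, g (e x) = f x) :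
    genFun f = genFun g := by
  ext m
  exact ENat.card_congr (e.subtypeEquiv fun x => by rw [h])

lemma genFun_sumElim (f : α → σ →₀ ℕ) (g : β → σ →₀ ℕ) :
    genFun (Sum.elim f g) = genFun f + genFun g := by
  ext m
  exact (ENat.card_congr Equiv.subtypeSum).trans (ENat.card_sum _ _)

lemma genFun_unique [Unique α] (f : α → σ →₀ ℕ) : genFun f = monomial (f default) 1 := by
  classical
  ext m
  rw [coeff_genFun, coeff_monomial]
  split_ifs with h
  · have : Unique {x // f x = m} := ⟨⟨default, h.symm⟩, fun x => Subtype.ext (Unique.eq_default _)⟩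
    simp
  · have : IsEmpty {x // f x = m} := ⟨fun x => h (by rw [← x.2, Unique.eq_default x.1])⟩
    simp

lemma genFun_fintype [Fintype α] (f : α → σ →₀ ℕ) : genFun f = ∑ x, monomial (f x) 1 := by
  classical
  ext m
  simp only [coeff_genFun, map_sum, coeff_monomial, ENat.card_eq_coe_fintype_card,
    Fintype.card_subtype, Finset.sum_boole, eq_comm]

lemma genFun_subtype_val {P : α → Prop} (s : Finset α) (hs : ∀ x, x ∈ s ↔ P x)
    (f : α → σ →₀ ℕ) : genFun (fun x : {x // P x} => f x.1) = ∑ x ∈ s, monomial (f x) 1 := by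
  let := Fintype.subtype s hs
  rw [genFun_fintype, Finset.sum_subtype s hs]

lemma genFun_add (f : α → σ →₀ ℕ) (g : β → σ →₀ ℕ) :
    genFun (fun x : α × β => f x.1 + g x.2) = genFun f * genFun g := by
  classical
  ext m
  let fib : {x : α × β // f x.1 + g x.2 = m} → antidiagonal m :=
    fun x => ⟨(f x.1.1, g x.1.2), mem_antidiagonal.2 x.2⟩
  have hfib (p : antidiagonal m) : {x // fib x = p} ≃ {a // f a = p.1.1} × {b // g b = p.1.2} :=
    { toFun x := (⟨x.1.1.1, congrArg (·.1.1) x.2⟩, ⟨x.1.1.2, congrArg (·.1.2) x.2⟩)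
      invFun y := ⟨⟨(y.1.1, y.2.1), by rw [y.1.2, y.2.2]; exact mem_antidiagonal.1 p.2⟩,
        Subtype.ext (Prod.ext y.1.2 y.2.2)⟩
      left_inv _ := rfl
      right_inv _ := rfl }
  rw [coeff_genFun, coeff_mul, ← ENat.card_congr (Equiv.sigmaFiberEquiv fib), ENat.card_sigma]
  refine Eq.trans ?_ (Finset.sum_coe_sort _ _)
  exact Fintype.sum_congr _ _ fun p => by rw [ENat.card_congr (hfib p), ENat.card_prod]; rfl

lemma genFun_const_add (c : σ →₀ ℕ) (f : α → σ →₀ ℕ) :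
    genFun (fun x => c + f x) = monomial c 1 * genFun f := by
  rw [← genFun_unique (fun _ : Unit => c), ← genFun_add]
  exact genFun_congr (Equiv.punitProd α).symm fun _ => rfl

end GenFun

namespace Walk

variable {α σ : Type*} {w : α → ℤ}

variable (w) in
noncomputable def pathGF (a : ℤ → α → Prop) (deg : α → σ →₀ ℕ) : MvPowerSeries σ ℕ∞ :=
  genFun fun l : Path w a => (l.1.map deg).sum

lemma pathGF_congr {a a' : ℤ → α → Prop} (ha : ∀ h, 0 ≤ h → ∀ x, (a h x ↔ a' h x))
    (deg : α → σ →₀ ℕ) : pathGF w a deg = pathGF w a' deg :=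
  genFun_congr (Equiv.subtypeEquivRight fun _ => isPath_congr ha) fun _ => rfl

lemma pathGF_eq_firstReturn {u : α} {a : ℤ → α → Prop} (hw : ∀ x, -1 ≤ w x) (hu : w u = 1)
    (hu0 : a 0 u) (hstart : ∀ x, a 0 x → 0 ≤ w x → x = u) (deg : α → σ →₀ ℕ) :
    pathGF w a deg = 1 + genFun (fun d : ReturnStep w a => deg u + deg d.1) *
      (pathGF w (fun h => a (h + 1)) deg * pathGF w a deg) := by
  let f (d : ReturnStep w a) := deg u + deg d.1
  let g (A : Path w fun h => a (h + 1)) := (A.1.map deg).sum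
  let k (B : Path w a) := (B.1.map deg).sum
  let gk (q : (Path w fun h => a (h + 1)) × Path w a) := g q.1 + k q.2
  calc pathGF w a deg
      = genFun (Sum.elim (fun _ : Unit => 0) fun p => f p.1 + gk p.2) :=
        (genFun_congr (firstReturnEquiv hw hu hu0 hstart) fun p => by
          rcases p with _ | _ <;>
            simp [Equiv.ofBijective, firstReturnEquiv, f, gk, g, k, add_assoc, add_left_comm]).symm
    _ = _ := by rw [genFun_sumElim, genFun_unique, genFun_add, genFun_add g k]; rfl

lemma pathGF_eq_groundFlat {f : α} {a : ℤ → α → Prop} (hf : w f = 0) (hf0 : a 0 f)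
    (deg : α → σ →₀ ℕ) :
    pathGF w a deg = pathGF w (AvoidingGround f a) deg +
      pathGF w (AvoidingGround f a) deg * (monomial (deg f) 1 * pathGF w a deg) := by
  let g (q : Path w (AvoidingGround f a)) := (q.1.map deg).sum
  let k (r : Path w a) := deg f + (r.1.map deg).sum
  calc pathGF w a deg
      = genFun (Sum.elim g fun p => g p.1 + k p.2) :=
        (genFun_congr (groundFlatEquiv hf hf0) fun p => by
          rcases p with _ | _ <;> simp [Equiv.ofBijective, groundFlatEquiv, g, k]).symm
    _ = _ := by rw [genFun_sumElim, genFun_add, genFun_const_add]; rfl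

end Walk

section EqBelow

variable {σ R : Type*} [CommSemiring R] (i : σ)

def EqBelow (N : ℕ) (F G : MvPowerSeries σ R) : Prop :=
  ∀ e : σ →₀ ℕ, e i < N → coeff e F = coeff e G

variable {i} {N : ℕ} {F G F' G' : MvPowerSeries σ R}

lemma EqBelow.refl (F : MvPowerSeries σ R) : EqBelow i N F F := fun _ _ => rfl

lemma EqBelow.add (h : EqBelow i N F G) (h' : EqBelow i N F' G') :
    EqBelow i N (F + F') (G + G') := fun e he => by simp only [map_add, h e he, h' e he]

lemma EqBelow.mul (h : EqBelow i N F G) (h' : EqBelow i N F' G') :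
    EqBelow i N (F * F') (G * G') := fun e he => by
  classical
  simp only [coeff_mul]
  refine Finset.sum_congr rfl fun p hp => ?_
  have hp : p.1 i + p.2 i = e i := by rw [← Finsupp.add_apply, mem_antidiagonal.1 hp]
  rw [h _ (by omega), h' _ (by omega)]

lemma EqBelow.X_mul (h : EqBelow i N F G) : EqBelow i (N + 1) (X i * F) (X i * G) :=
  fun e he => by
  classical
  simp only [X_def, coeff_monomial_mul]
  split_ifs with hle
  · have : 1 ≤ e i := by simpa using hle i
    rw [h _ (by simp; omega)]
  · rfl

theorem eq_of_fixedPoint_equations {j : σ} {M E B L : MvPowerSeries σ R}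
    (hM : M = 1 + X i * (1 + X j) * E * M) (hE : E = 1 + X i * M * E)
    (hL : L = 1 + X i * B * L) (hB : B = L + X i * X j * L * B) : M = B ∧ E = L := by
  have hM' : M = 1 + X i * ((1 + X j) * E * M) := hM.trans (by ring)
  have hE' : E = 1 + X i * (M * E) := hE.trans (by ring)
  have hL' : L = 1 + X i * (B * L) := hL.trans (by ring)
  have hB' : B = 1 + X i * ((1 + X j) * L * B) :=
    calc B = L + X i * X j * L * B := hB
      _ = 1 + X i * B * L + X i * X j * L * B := by rw [← hL]
      _ = _ := by ring
  have key : ∀ N, EqBelow i N M B ∧ EqBelow i N E L := by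
    intro N
    induction N with
    | zero => exact ⟨fun _ h => (Nat.not_lt_zero _ h).elim, fun _ h => (Nat.not_lt_zero _ h).elim⟩
    | succ N ih =>
      have hMB := (EqBelow.refl (1 : MvPowerSeries σ R)).add
        (((EqBelow.refl (1 + X j)).mul ih.2).mul ih.1).X_mul
      have hEL := (EqBelow.refl (1 : MvPowerSeries σ R)).add (ih.1.mul ih.2).X_mul
      rw [← hM', ← hB'] at hMB
      rw [← hE', ← hL'] at hEL
      exact ⟨hMB, hEL⟩
  exact ⟨ext fun e => (key _).1 e (lt_add_one (e i)), ext fun e => (key _).2 e (lt_add_one (e i))⟩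

end EqBelow

lemma Finsupp.single_zero_add_single_one_inj {a b c d : ℕ} :
    (Finsupp.single 0 a + Finsupp.single 1 b : Fin 2 →₀ ℕ) =
      Finsupp.single 0 c + Finsupp.single 1 d ↔ a = c ∧ b = d := by
  refine ⟨fun h => ⟨?_, ?_⟩, by rintro ⟨rfl, rfl⟩; rfl⟩
  · simpa using congrArg (· 0) h
  · simpa using congrArg (· 1) h

lemma toNat_coeff_genFun {σ α : Type*} (f : α → σ →₀ ℕ) (e : σ →₀ ℕ) :
    (coeff e (genFun f)).toNat = Nat.card {x // f x = e} := rfl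

namespace SchStep

/-- `X 0` counts the semilength and `X 1` the double horizontal steps. -/
noncomputable def deg : SchStep → Fin 2 →₀ ℕ
  | up => 0
  | down => Finsupp.single 0 1
  | horiz => Finsupp.single 0 1 + Finsupp.single 1 1

lemma sum_map_deg (p : List SchStep) :
    (p.map deg).sum = Finsupp.single 0 (p.count down + p.count horiz) +
      Finsupp.single 1 (p.count horiz) := by
  induction p with
  | nil => simp
  | cons x p ih =>
    cases x <;> simp [ih, deg, Finsupp.single_add] <;> abel

lemma pathLen_eq (p : List SchStep) :
    (pathLen p : ℤ) = 2 * (p.count down + p.count horiz : ℕ) + pathHeight p := by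
  induction p with
  | nil => simp [pathLen, pathHeight]
  | cons x p ih =>
    have hlen : pathLen (x :: p) = x.len + pathLen p := by simp [pathLen]
    have hheight : pathHeight (x :: p) = x.rise + pathHeight p := by simp [pathHeight]
    rw [hlen, hheight]
    cases x <;> simp [len, rise] <;> omega

lemma isBigSchroeder_iff (p : List SchStep) :
    IsBigSchroeder p ↔ Walk.IsPath rise (fun _ _ => True) p := by
  have := Walk.forall_prefix_nonneg_iff (w := rise) (c := 0) (l := p)
  simp only [zero_add, le_refl, true_and] at this
  simp only [IsBigSchroeder, Walk.IsPath, and_true]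
  exact and_comm.trans (and_congr_left' this)

noncomputable def bigGF : MvPowerSeries (Fin 2) ℕ∞ :=
  Walk.pathGF rise (fun _ _ => True) deg

noncomputable def littleGF : MvPowerSeries (Fin 2) ℕ∞ :=
  Walk.pathGF rise (Walk.AvoidingGround horiz fun _ _ => True) deg

lemma monomial_deg_horiz : monomial (deg horiz) (1 : ℕ∞) = X 0 * X 1 := by
  simp [deg, X_def, monomial_mul_monomial]

lemma bigGF_eq : bigGF = littleGF + X 0 * X 1 * littleGF * bigGF := by
  refine (Walk.pathGF_eq_groundFlat (w := rise) (f := horiz) rfl trivial deg).trans ?_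
  rw [← bigGF, ← littleGF, monomial_deg_horiz]
  ring

lemma littleGF_eq : littleGF = 1 + X 0 * bigGF * littleGF := by
  have hstart (x : SchStep) (hx : Walk.AvoidingGround horiz (fun _ _ => True) 0 x)
      (hx0 : 0 ≤ rise x) : x = up := by
    cases x <;> simp_all [Walk.AvoidingGround, rise]
  have hreturn : genFun (fun d : Walk.ReturnStep rise
      (Walk.AvoidingGround horiz fun _ _ => True) => deg up + deg d.1) = X 0 := by
    rw [genFun_subtype_val {down} (fun x => by cases x <;> simp [Walk.AvoidingGround, rise])
      (fun d => deg up + deg d)]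
    simp [deg, X_def]
  have hshift :
      Walk.pathGF rise (fun h => Walk.AvoidingGround horiz (fun _ _ => True) (h + 1)) deg =
        bigGF :=
    Walk.pathGF_congr (fun h hh x => by
      simp only [Walk.AvoidingGround, true_and, iff_true]; omega) deg
  refine (Walk.pathGF_eq_firstReturn (u := up) (fun x => by cases x <;> simp [rise]) rfl
    ⟨trivial, by simp⟩ hstart deg).trans ?_
  rw [hreturn, hshift, ← littleGF]
  ring

lemma card_bigSchroeder (n k : ℕ) :
    Nat.card {p : List SchStep //
        IsBigSchroeder p ∧ pathLen p = 2 * n ∧ p.count SchStep.horiz = k} =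
      (coeff (Finsupp.single 0 n + Finsupp.single 1 k) bigGF).toNat := by
  rw [bigGF, Walk.pathGF, toNat_coeff_genFun]
  refine Nat.card_congr ((Equiv.subtypeEquivRight fun p => ?_).trans
    (Equiv.subtypeSubtypeEquivSubtypeInter (Walk.IsPath rise fun _ _ => True)
      fun p => (p.map deg).sum = _).symm)
  rw [isBigSchroeder_iff, sum_map_deg, Finsupp.single_zero_add_single_one_inj]
  refine and_congr_right fun hp => ?_
  have := pathLen_eq p
  have h0 : pathHeight p = 0 := hp.2
  omega

end SchStep

/-- The steps of an odd-special Dyck path: a special step is a `markedDown`. -/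
inductive MarkedStep
  | up
  | down
  | markedDown
  deriving DecidableEq

namespace MarkedStep

def isUp : MarkedStep → Bool
  | up => true
  | _ => false

def rise (x : MarkedStep) : ℤ := if x.isUp then 1 else -1

/-- `X 0` counts the semilength and `X 1` the special steps. -/
noncomputable def deg : MarkedStep → Fin 2 →₀ ℕ
  | up => 0
  | down => Finsupp.single 0 1
  | markedDown => Finsupp.single 0 1 + Finsupp.single 1 1

def OddMarked (h : ℤ) (x : MarkedStep) : Prop := x = markedDown → h % 2 = 1

def EvenMarked (h : ℤ) (x : MarkedStep) : Prop := x = markedDown → h % 2 = 0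

lemma sum_map_deg (l : List MarkedStep) :
    (l.map deg).sum = Finsupp.single 0 (l.count down + l.count markedDown) +
      Finsupp.single 1 (l.count markedDown) := by
  induction l with
  | nil => simp
  | cons x l ih =>
    cases x <;> simp [ih, deg, Finsupp.single_add] <;> abel

lemma length_eq (l : List MarkedStep) :
    (l.length : ℤ) = 2 * (l.count down + l.count markedDown : ℕ) + Walk.height rise l := by
  induction l with
  | nil => simp
  | cons x l ih => cases x <;> simp [rise, isUp] <;> omega

/-- The encoding used by `IsOddSpecial`: the underlying Dyck path and the positions of the
special steps. -/
def toDyck (l : List MarkedStep) : List Bool × Finset ℕ :=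
  (l.map isUp, (l.findIdxs (· == markedDown)).toFinset)

def ofDyck (ps : List Bool × Finset ℕ) : List MarkedStep :=
  ps.1.mapIdx fun i b => if b then up else if i ∈ ps.2 then markedDown else down

lemma mem_toDyck_snd {l : List MarkedStep} {i : ℕ} :
    i ∈ (toDyck l).2 ↔ ∃ hi : i < l.length, l[i] = markedDown := by
  simp [toDyck]

lemma card_toDyck_snd (l : List MarkedStep) : (toDyck l).2.card = l.count markedDown := by
  rw [toDyck, List.toFinset_card_of_nodup List.nodup_findIdxs, List.length_findIdxs,
    List.count]

lemma ofDyck_toDyck (l : List MarkedStep) : ofDyck (toDyck l) = l := by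
  refine List.ext_getElem (by simp [ofDyck, toDyck]) fun i h₁ h₂ => ?_
  simp only [ofDyck, List.getElem_mapIdx, mem_toDyck_snd]
  simp only [toDyck, List.getElem_map]
  cases h : l[i] <;> simp [isUp, h, h₂]

lemma toDyck_ofDyck {ps : List Bool × Finset ℕ} (h : ∀ i ∈ ps.2, ps.1.getD i true = false) :
    toDyck (ofDyck ps) = ps := by
  obtain ⟨p, S⟩ := ps
  refine Prod.ext (List.ext_getElem (by simp [ofDyck, toDyck]) fun i _ _ => ?_)
    (Finset.ext fun i => ?_)
  · simp only [toDyck, ofDyck, List.getElem_map, List.getElem_mapIdx]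
    split_ifs <;> simp_all [isUp]
  · simp only [mem_toDyck_snd, ofDyck, List.getElem_mapIdx, List.length_mapIdx]
    constructor
    · rintro ⟨hi, h'⟩
      split_ifs at h' with _ hS
      exact hS
    · intro hi
      have := h i hi
      have hlt : i < p.length := by
        by_contra hge
        simp [List.getD_eq_getElem?_getD, List.getElem?_eq_none (by omega : p.length ≤ i)] at this
      simp only [List.getD_eq_getElem?_getD, List.getElem?_eq_getElem hlt, Option.getD_some] at this
      exact ⟨hlt, by simp [this, hi]⟩

lemma isOddSpecial_toDyck_iff (l : List MarkedStep) :
    IsOddSpecial (toDyck l) ↔ Walk.IsPath rise OddMarked l := by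
  have hheight (q : List MarkedStep) : dyckHeight (q.map isUp) = Walk.height rise q := by
    simp only [dyckHeight, Walk.height, List.map_map]
    rfl
  have hfloor := Walk.forall_prefix_nonneg_iff (w := fun b : Bool => if b then (1 : ℤ) else -1)
    (c := 0) (l := l.map isUp)
  simp only [zero_add, le_refl, true_and, ← Walk.isWalk_map] at hfloor
  have hmarks : (∀ i, (∃ hi : i < l.length, l[i] = markedDown) → i < (l.map isUp).length ∧
      (l.map isUp).getD i true = false ∧ dyckHeight ((l.map isUp).take i) % 2 = 1) ↔
      Walk.IsWalk rise OddMarked 0 l := by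
    simp only [Walk.isWalk_iff_getElem, zero_add, OddMarked, ← List.map_take, hheight]
    constructor
    · exact fun h i hi hmark => (h i ⟨hi, hmark⟩).2.2
    · rintro h i ⟨hi, hmark⟩
      exact ⟨by simpa using hi, by simp [List.getD_eq_getElem?_getD, hi, hmark, isUp],
        h i hi hmark⟩
  simp only [IsOddSpecial, IsDyck, Walk.IsPath, Walk.isWalk_and, mem_toDyck_snd]
  simp only [toDyck, hheight]
  rw [hmarks]
  exact ⟨fun ⟨⟨h0, hf⟩, hm⟩ => ⟨⟨hfloor.1 hf, hm⟩, h0⟩,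
    fun ⟨⟨hf, hm⟩, h0⟩ => ⟨⟨h0, hfloor.2 hf⟩, hm⟩⟩

noncomputable def pathEquivOddSpecial :
    Walk.Path rise OddMarked ≃ {ps : List Bool × Finset ℕ // IsOddSpecial ps} where
  toFun l := ⟨toDyck l.1, (isOddSpecial_toDyck_iff l.1).2 l.2⟩
  invFun ps := ⟨ofDyck ps.1, by
    rw [← isOddSpecial_toDyck_iff, toDyck_ofDyck fun i hi => (ps.2.2 i hi).2.1]
    exact ps.2⟩
  left_inv l := Subtype.ext (ofDyck_toDyck l.1)
  right_inv ps := Subtype.ext (toDyck_ofDyck fun i hi => (ps.2.2 i hi).2.1)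

noncomputable def oddGF : MvPowerSeries (Fin 2) ℕ∞ := Walk.pathGF rise OddMarked deg

noncomputable def evenGF : MvPowerSeries (Fin 2) ℕ∞ := Walk.pathGF rise EvenMarked deg

lemma card_oddSpecial (n k : ℕ) :
    Nat.card {ps : List Bool × Finset ℕ //
        IsOddSpecial ps ∧ ps.1.length = 2 * n ∧ ps.2.card = k} =
      (coeff (Finsupp.single 0 n + Finsupp.single 1 k) oddGF).toNat := by
  rw [oddGF, Walk.pathGF, toNat_coeff_genFun]
  refine Nat.card_congr (Equiv.subtypeSubtypeEquivSubtypeInter IsOddSpecial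
    (fun ps => ps.1.length = 2 * n ∧ ps.2.card = k)).symm |>.trans ?_
  refine (Nat.card_congr (pathEquivOddSpecial.subtypeEquiv fun l => ?_)).symm
  change _ ↔ (toDyck l.1).1.length = 2 * n ∧ (toDyck l.1).2.card = k
  rw [card_toDyck_snd, show (toDyck l.1).1.length = l.1.length from List.length_map _,
    sum_map_deg, Finsupp.single_zero_add_single_one_inj]
  have := length_eq l.1
  have h0 := l.2.2
  omega

lemma neg_one_le_rise (x : MarkedStep) : -1 ≤ rise x := by cases x <;> simp [rise, isUp]

lemma eq_up_of_rise_nonneg {x : MarkedStep} (hx : 0 ≤ rise x) : x = up := by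
  cases x <;> simp_all [rise, isUp]

lemma oddGF_eq : oddGF = 1 + X 0 * (1 + X 1) * evenGF * oddGF := by
  have hreturn : genFun (fun d : Walk.ReturnStep rise OddMarked => deg up + deg d.1) =
      X 0 * (1 + X 1) := by
    rw [genFun_subtype_val {down, markedDown}
      (fun x => by cases x <;> simp [rise, isUp, OddMarked]) (fun d => deg up + deg d)]
    simp [deg, X_def, monomial_mul_monomial, mul_add]
  have hshift : Walk.pathGF rise (fun h => OddMarked (h + 1)) deg = evenGF :=
    Walk.pathGF_congr (fun h _ _ => imp_congr_right fun _ => by omega) deg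
  refine (Walk.pathGF_eq_firstReturn neg_one_le_rise (u := up) rfl (by simp [OddMarked])
    (fun _ _ => eq_up_of_rise_nonneg) deg).trans ?_
  rw [hreturn, hshift, ← oddGF]
  ring

lemma evenGF_eq : evenGF = 1 + X 0 * oddGF * evenGF := by
  have hreturn : genFun (fun d : Walk.ReturnStep rise EvenMarked => deg up + deg d.1) = X 0 := by
    rw [genFun_subtype_val {down}
      (fun x => by cases x <;> simp [rise, isUp, EvenMarked]) (fun d => deg up + deg d)]
    simp [deg, X_def]
  have hshift : Walk.pathGF rise (fun h => EvenMarked (h + 1)) deg = oddGF :=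
    Walk.pathGF_congr (fun h _ _ => imp_congr_right fun _ => by omega) deg
  refine (Walk.pathGF_eq_firstReturn neg_one_le_rise (u := up) rfl (by simp [EvenMarked])
    (fun _ _ => eq_up_of_rise_nonneg) deg).trans ?_
  rw [hreturn, hshift, ← evenGF]
  ring

end MarkedStep

/-- The number of odd-special Dyck paths of length `2n` with exactly `k` special steps
equals the number of big Schröder paths of length `2n` with exactly `k` double
horizontal steps. -/
theorem odd_special_eq_big_schroeder (n k : ℕ) :
    Nat.card {ps : List Bool × Finset ℕ //
        IsOddSpecial ps ∧ ps.1.length = 2 * n ∧ ps.2.card = k} =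
      Nat.card {p : List SchStep //
        IsBigSchroeder p ∧ pathLen p = 2 * n ∧ p.count SchStep.horiz = k} := by
  rw [MarkedStep.card_oddSpecial, SchStep.card_bigSchroeder, (eq_of_fixedPoint_equations
    MarkedStep.oddGF_eq MarkedStep.evenGF_eq SchStep.littleGF_eq SchStep.bigGF_eq).1]
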